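/- arXiv:2509.16607 — 2 statements merged into one kernel-verified Lean document; each statement's English description precedes it below -/
import Mathlib

section
/- Let T > 0, a > 0, and let y : [0,T] → ℝ be a nonnegative continuously differentiable function and r : [0,T] → ℝ a nonnegative continuous function such that y'(t) + a·y(t) ≤ r(t)·√(y(t)) for all t ∈ [0,T]. Then for all t ∈ [0,T]: √(y(t)) + (a/2)·∫₀ᵗ √(y(s)) ds ≤ √(y(0)) + (1/2)·∫₀ᵗ r(s) ds. -/
lemma sqrt_add_le_aux {x e : ℝ} (hx : 0 ≤ x) (he : 0 ≤ e) :
    Real.sqrt (x + e) ≤ Real.sqrt x + Real.sqrt e := by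
  have hw2 : Real.sqrt (x + e) ^ 2 = x + e := Real.sq_sqrt (by linarith)
  have hx2 : Real.sqrt x ^ 2 = x := Real.sq_sqrt hx
  have he2 : Real.sqrt e ^ 2 = e := Real.sq_sqrt he
  nlinarith [Real.sqrt_nonneg (x + e), Real.sqrt_nonneg x, Real.sqrt_nonneg e,
    mul_nonneg (Real.sqrt_nonneg x) (Real.sqrt_nonneg e)]

theorem stmt_14 (T a : ℝ) (hT : 0 < T) (ha : 0 < a)
    (y y' r : ℝ → ℝ)
    (hy0 : ∀ t ∈ Set.Icc (0 : ℝ) T, 0 ≤ y t)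
    (hy' : ∀ t ∈ Set.Icc (0 : ℝ) T, HasDerivAt y (y' t) t)
    (hy'c : ContinuousOn y' (Set.Icc 0 T))
    (hrc : ContinuousOn r (Set.Icc 0 T))
    (hr0 : ∀ t ∈ Set.Icc (0 : ℝ) T, 0 ≤ r t)
    (hineq : ∀ t ∈ Set.Icc (0 : ℝ) T, y' t + a * y t ≤ r t * Real.sqrt (y t)) :
    ∀ t ∈ Set.Icc (0 : ℝ) T,
      Real.sqrt (y t) + (a / 2) * ∫ s in (0 : ℝ)..t, Real.sqrt (y s) ≤
        Real.sqrt (y 0) + (1 / 2) * ∫ s in (0 : ℝ)..t, r s := by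
  intro t ht
  obtain ⟨ht0, htT⟩ := ht
  have hsub : Set.uIcc (0:ℝ) t ⊆ Set.Icc 0 T := by
    rw [Set.uIcc_of_le ht0]
    exact Set.Icc_subset_Icc le_rfl htT
  have hyc : ContinuousOn y (Set.Icc 0 T) :=
    fun s hs => ((hy' s hs).continuousAt).continuousWithinAt
  have hsqyc : ContinuousOn (fun s => Real.sqrt (y s)) (Set.Icc 0 T) :=
    Real.continuous_sqrt.comp_continuousOn hyc
  have hIy : IntervalIntegrable (fun s => Real.sqrt (y s)) MeasureTheory.volume 0 t :=
    (hsqyc.mono hsub).intervalIntegrable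
  have hIr : IntervalIntegrable r MeasureTheory.volume 0 t :=
    (hrc.mono hsub).intervalIntegrable
  have key : ∀ ε : ℝ, 0 < ε →
      Real.sqrt (y t) + (a / 2) * ∫ s in (0:ℝ)..t, Real.sqrt (y s) ≤
        Real.sqrt (y 0 + ε) + (1 / 2) * (∫ s in (0:ℝ)..t, r s) +
          (a/2) * t * Real.sqrt ε := by
    intro ε hε
    set g : ℝ → ℝ := fun s => y' s / (2 * Real.sqrt (y s + ε)) with hg
    have hpos : ∀ s ∈ Set.Icc (0:ℝ) T, 0 < y s + ε := fun s hs => by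
      have := hy0 s hs; linarith
    have hderiv : ∀ s ∈ Set.Icc (0:ℝ) T,
        HasDerivAt (fun u => Real.sqrt (y u + ε)) (g s) s := by
      intro s hs
      have h1 : HasDerivAt (fun u => y u + ε) (y' s) s := (hy' s hs).add_const ε
      have h2 := (Real.hasDerivAt_sqrt (ne_of_gt (hpos s hs))).comp s h1
      convert h2 using 1
      · rfl
      · rfl
      · rfl
      have hw0 : (0:ℝ) < Real.sqrt (y s + ε) := Real.sqrt_pos.mpr (hpos s hs)
      simp only [hg]
      field_simp
    have hgc : ContinuousOn g (Set.Icc 0 T) := by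
      apply hy'c.div
      · exact (continuous_const.mul Real.continuous_sqrt).comp_continuousOn
          (hyc.add continuousOn_const)
      · intro s hs
        have := Real.sqrt_pos.mpr (hpos s hs)
        positivity
    have hftc : ∫ s in (0:ℝ)..t, g s =
        Real.sqrt (y t + ε) - Real.sqrt (y 0 + ε) :=
      intervalIntegral.integral_eq_sub_of_hasDerivAt
        (fun s hs => hderiv s (hsub hs)) ((hgc.mono hsub).intervalIntegrable)
    have hpt : ∀ s ∈ Set.Icc (0:ℝ) t, g s ≤
        r s / 2 + (a/2) * Real.sqrt ε - (a/2) * Real.sqrt (y s) := by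
      intro s hs
      have hsT : s ∈ Set.Icc (0:ℝ) T := Set.Icc_subset_Icc le_rfl htT hs
      have hys := hy0 s hsT
      have hrs := hr0 s hsT
      have hin := hineq s hsT
      have hw0 : 0 < Real.sqrt (y s + ε) := Real.sqrt_pos.mpr (hpos s hsT)
      have hw2 : Real.sqrt (y s + ε) ^ 2 = y s + ε := Real.sq_sqrt (le_of_lt (hpos s hsT))
      have hsu0 : 0 ≤ Real.sqrt (y s) := Real.sqrt_nonneg _
      have hsu2 : Real.sqrt (y s) ^ 2 = y s := Real.sq_sqrt hys
      have hse0 : 0 ≤ Real.sqrt ε := Real.sqrt_nonneg _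
      have hse2 : Real.sqrt ε ^ 2 = ε := Real.sq_sqrt (le_of_lt hε)
      have h1 : Real.sqrt (y s) ≤ Real.sqrt (y s + ε) :=
        Real.sqrt_le_sqrt (by linarith)
      have h2 : Real.sqrt (y s + ε) ≤ Real.sqrt (y s) + Real.sqrt ε :=
        sqrt_add_le_aux hys (le_of_lt hε)
      rw [hg]
      rw [div_le_iff₀ (by positivity)]
      have hA : Real.sqrt (y s) * (Real.sqrt (y s + ε) - Real.sqrt (y s)) ≤
          Real.sqrt (y s + ε) * Real.sqrt ε :=
        le_trans (mul_le_mul_of_nonneg_left (by linarith) hsu0)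
          (mul_le_mul_of_nonneg_right h1 hse0)
      have hB := mul_le_mul_of_nonneg_left hA ha.le
      have hC : 0 ≤ r s * (Real.sqrt (y s + ε) - Real.sqrt (y s)) :=
        mul_nonneg hrs (by linarith)
      have hD : a * Real.sqrt (y s) ^ 2 = a * y s := by rw [hsu2]
      nlinarith [hB, hC, hD]
    have hIrhs : IntervalIntegrable
        (fun s => r s / 2 + (a/2) * Real.sqrt ε - (a/2) * Real.sqrt (y s))
        MeasureTheory.volume 0 t :=
      (((hIr.div_const 2).add intervalIntegrable_const).sub (hIy.const_mul _))
    have hmono : ∫ s in (0:ℝ)..t, g s ≤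
        ∫ s in (0:ℝ)..t, (r s / 2 + (a/2) * Real.sqrt ε - (a/2) * Real.sqrt (y s)) :=
      intervalIntegral.integral_mono_on ht0 ((hgc.mono hsub).intervalIntegrable)
        hIrhs hpt
    have hsplit : ∫ s in (0:ℝ)..t, (r s / 2 + (a/2) * Real.sqrt ε - (a/2) * Real.sqrt (y s))
        = (1/2) * (∫ s in (0:ℝ)..t, r s) + (a/2) * Real.sqrt ε * t
          - (a/2) * ∫ s in (0:ℝ)..t, Real.sqrt (y s) := by
      rw [intervalIntegral.integral_sub ((hIr.div_const 2).add intervalIntegrable_const)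
        (hIy.const_mul _), intervalIntegral.integral_add (hIr.div_const 2)
        intervalIntegrable_const, intervalIntegral.integral_div,
        intervalIntegral.integral_const_mul, intervalIntegral.integral_const]
      simp
      ring
    have hsy : Real.sqrt (y t) ≤ Real.sqrt (y t + ε) := Real.sqrt_le_sqrt (by linarith)
    rw [hftc] at hmono
    rw [hsplit] at hmono
    linarith
  apply le_of_forall_pos_le_add
  intro δ hδ
  have hD : (0:ℝ) < 1 + a * T / 2 := by nlinarith
  set ε := (δ / (1 + a * T / 2)) ^ 2 with hεdef
  have hε : 0 < ε := by positivity
  have hse : Real.sqrt ε = δ / (1 + a * T / 2) := by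
    rw [hεdef, Real.sqrt_sq (by positivity)]
  have h0T : (0:ℝ) ∈ Set.Icc (0:ℝ) T := ⟨le_rfl, hT.le⟩
  have h1 : Real.sqrt (y 0 + ε) ≤ Real.sqrt (y 0) + Real.sqrt ε :=
    sqrt_add_le_aux (hy0 0 h0T) hε.le
  have h2 := key ε hε
  have h3 : (a/2) * t * Real.sqrt ε ≤ (a/2) * T * Real.sqrt ε := by
    have h5 : 0 ≤ Real.sqrt ε := Real.sqrt_nonneg _
    exact mul_le_mul_of_nonneg_right
      (mul_le_mul_of_nonneg_left htT (by linarith)) h5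
  have h4 : Real.sqrt ε + (a/2) * T * Real.sqrt ε = δ := by
    rw [hse]; field_simp
  linarith
end

section
/- Let β₁, β₂, β₃, β₄ be strictly positive real numbers with β₁β₄ > β₂β₃, let κ ≥ 1, and let 0 < δ₁ < 1/2·min{1, √(β₂/β₃), √(β₃/β₂)}·min{1, (β₁β₄−β₂β₃)/(β₁β₄)}. Then the quadratic form on ℝ⁶ given by Q(p, q, c, d, e, f) = (β₁/(2β₂))p² + (β₄/(2β₃))q² + (1/κ')pq + (1/(2β₂))c² + (1/(2β₃))d² + (1/(2β₂))e² + (1/(2β₃))f² + δ₁((1/β₂)ec + (1/β₃)fd), where κ' = κ ≥ 1, satisfies Q(x) ≥ c₀·|x|² for some constant c₀ > 0 depending only on β₁, β₂, β₃, β₄, δ₁ (and not on κ). In particular Q is positive definite. -/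
set_option maxHeartbeats 1600000


theorem stmt_18 (β₁ β₂ β₃ β₄ δ₁ : ℝ)
    (h₁ : 0 < β₁) (h₂ : 0 < β₂) (h₃ : 0 < β₃) (h₄ : 0 < β₄)
    (hdet : β₁ * β₄ > β₂ * β₃)
    (hδ₁ : 0 < δ₁)
    (hδ₂ : δ₁ < 1 / 2 * min 1 (min (Real.sqrt (β₂ / β₃)) (Real.sqrt (β₃ / β₂))) *
      min 1 ((β₁ * β₄ - β₂ * β₃) / (β₁ * β₄))) :
    ∃ c₀ : ℝ, 0 < c₀ ∧
      ∀ κ : ℝ, 1 ≤ κ →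
        ∀ p q c d e f : ℝ,
          c₀ * (p ^ 2 + q ^ 2 + c ^ 2 + d ^ 2 + e ^ 2 + f ^ 2) ≤
            (β₁ / (2 * β₂)) * p ^ 2 + (β₄ / (2 * β₃)) * q ^ 2 + (1 / κ) * p * q +
              (1 / (2 * β₂)) * c ^ 2 + (1 / (2 * β₃)) * d ^ 2 +
              (1 / (2 * β₂)) * e ^ 2 + (1 / (2 * β₃)) * f ^ 2 +
              δ₁ * ((1 / β₂) * e * c + (1 / β₃) * f * d) := by
  have hδhalf : δ₁ < 1 / 2 := by
    have hm1 : min 1 (min (Real.sqrt (β₂ / β₃)) (Real.sqrt (β₃ / β₂))) ≤ 1 := min_le_left _ _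
    have hm1' : 0 ≤ min 1 (min (Real.sqrt (β₂ / β₃)) (Real.sqrt (β₃ / β₂))) :=
      le_min zero_le_one (le_min (Real.sqrt_nonneg _) (Real.sqrt_nonneg _))
    have hm2 : min 1 ((β₁ * β₄ - β₂ * β₃) / (β₁ * β₄)) ≤ 1 := min_le_left _ _
    have hm2' : 0 ≤ min 1 ((β₁ * β₄ - β₂ * β₃) / (β₁ * β₄)) := by
      exact le_min zero_le_one (div_nonneg (by linarith) (by positivity))
    nlinarith [hδ₂]
  set A := β₁ / (2 * β₂) with hAdef
  set B := β₄ / (2 * β₃) with hBdef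
  have hA : 0 < A := by positivity
  have hB : 0 < B := by positivity
  have hAB : 1 / 4 < A * B := by
    rw [hAdef, hBdef, div_mul_div_comm]
    rw [lt_div_iff₀ (by positivity)]
    nlinarith
  set ε := (4 * A * B - 1) / (4 * (A + B)) with hεdef
  have hε : 0 < ε := by
    apply div_pos (by linarith) (by linarith)
  have hεA : ε < A := by
    rw [hεdef, div_lt_iff₀ (by linarith)]
    nlinarith
  have hεB : ε < B := by
    rw [hεdef, div_lt_iff₀ (by linarith)]
    nlinarith
  have hkey : 1 / 4 ≤ (A - ε) * (B - ε) := by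
    have h : ε * (4 * (A + B)) = 4 * A * B - 1 := by
      rw [hεdef]; field_simp
    nlinarith [sq_nonneg ε]
  refine ⟨min ε (min ((1 - δ₁) / (2 * β₂)) ((1 - δ₁) / (2 * β₃))), ?_, ?_⟩
  · exact lt_min hε (lt_min (div_pos (by linarith) (by positivity))
      (div_pos (by linarith) (by positivity)))
  intro κ hκ p q c d e f
  have hκ0 : 0 < κ := lt_of_lt_of_le one_pos hκ
  have ht0 : 0 < 1 / κ := by positivity
  have ht1 : 1 / κ ≤ 1 := by
    rw [div_le_one hκ0]; exact hκ
  have hAε : 0 < A - ε := sub_pos.mpr hεA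
  have hq : (1 / κ) ^ 2 ≤ 4 * ((A - ε) * (B - ε)) := by nlinarith
  have h1 : ε * (p ^ 2 + q ^ 2) ≤ A * p ^ 2 + B * q ^ 2 + (1 / κ) * p * q := by
    nlinarith [sq_nonneg (2 * (A - ε) * p + (1 / κ) * q),
      mul_nonneg (sub_nonneg.mpr hq) (sq_nonneg q), hAε]
  have h2 : (1 - δ₁) / (2 * β₂) * (c ^ 2 + e ^ 2) ≤
      (1 / (2 * β₂)) * c ^ 2 + (1 / (2 * β₂)) * e ^ 2 + δ₁ * ((1 / β₂) * e * c) := by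
    have key : (1 / (2 * β₂)) * c ^ 2 + (1 / (2 * β₂)) * e ^ 2 + δ₁ * ((1 / β₂) * e * c)
        - (1 - δ₁) / (2 * β₂) * (c ^ 2 + e ^ 2) = δ₁ / (2 * β₂) * (c + e) ^ 2 := by
      field_simp; ring
    linarith [key, mul_nonneg (by positivity : (0:ℝ) ≤ δ₁ / (2 * β₂)) (sq_nonneg (c + e))]
  have h3 : (1 - δ₁) / (2 * β₃) * (d ^ 2 + f ^ 2) ≤
      (1 / (2 * β₃)) * d ^ 2 + (1 / (2 * β₃)) * f ^ 2 + δ₁ * ((1 / β₃) * f * d) := by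
    have key : (1 / (2 * β₃)) * d ^ 2 + (1 / (2 * β₃)) * f ^ 2 + δ₁ * ((1 / β₃) * f * d)
        - (1 - δ₁) / (2 * β₃) * (d ^ 2 + f ^ 2) = δ₁ / (2 * β₃) * (d + f) ^ 2 := by
      field_simp; ring
    linarith [key, mul_nonneg (by positivity : (0:ℝ) ≤ δ₁ / (2 * β₃)) (sq_nonneg (d + f))]
  have hc₀ε : min ε (min ((1 - δ₁) / (2 * β₂)) ((1 - δ₁) / (2 * β₃))) ≤ ε := min_le_left _ _
  have hc₀2 : min ε (min ((1 - δ₁) / (2 * β₂)) ((1 - δ₁) / (2 * β₃))) ≤ (1 - δ₁) / (2 * β₂) :=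
    le_trans (min_le_right _ _) (min_le_left _ _)
  have hc₀3 : min ε (min ((1 - δ₁) / (2 * β₂)) ((1 - δ₁) / (2 * β₃))) ≤ (1 - δ₁) / (2 * β₃) :=
    le_trans (min_le_right _ _) (min_le_right _ _)
  have hsplit : min ε (min ((1 - δ₁) / (2 * β₂)) ((1 - δ₁) / (2 * β₃))) *
      (p ^ 2 + q ^ 2 + c ^ 2 + d ^ 2 + e ^ 2 + f ^ 2) =
      min ε (min ((1 - δ₁) / (2 * β₂)) ((1 - δ₁) / (2 * β₃))) * (p ^ 2 + q ^ 2) +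
      min ε (min ((1 - δ₁) / (2 * β₂)) ((1 - δ₁) / (2 * β₃))) * (c ^ 2 + e ^ 2) +
      min ε (min ((1 - δ₁) / (2 * β₂)) ((1 - δ₁) / (2 * β₃))) * (d ^ 2 + f ^ 2) := by ring
  linarith [hsplit, h1, h2, h3,
    mul_le_mul_of_nonneg_right hc₀ε (by positivity : (0:ℝ) ≤ p ^ 2 + q ^ 2),
    mul_le_mul_of_nonneg_right hc₀2 (by positivity : (0:ℝ) ≤ c ^ 2 + e ^ 2),
    mul_le_mul_of_nonneg_right hc₀3 (by positivity : (0:ℝ) ≤ d ^ 2 + f ^ 2)]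
end
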